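/- arXiv:1005.1991 — 4 statements merged into one kernel-verified Lean document; each statement's English description precedes it below -/
import Mathlib

section
/- If T ⊆ List ℕ is a prefix-closed set of finite sequences of natural numbers on which the proper-extension relation (a ≺ b iff b is a proper prefix of a) is well-founded (i.e., T is a well-founded tree), then the Kleene–Brouwer ordering restricted to T is well-founded; hence, being a linear order, it is a well-order on T. -/
/-- The Kleene–Brouwer ordering on finite sequences of natural numbers. -/
def KBLt (a b : List ℕ) : Prop :=
  (b <+: a ∧ b ≠ a) ∨ ∃ (l : List ℕ) (m n : ℕ), m < n ∧ (l ++ [m]) <+: a ∧ (l ++ [n]) <+: b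

/-- `T` is prefix-closed: together with any list it contains all its prefixes. -/
def PrefixClosed (T : Set (List ℕ)) : Prop :=
  ∀ l ∈ T, ∀ l' : List ℕ, l' <+: l → l' ∈ T

/-!
By well-founded recursion on the tree, every node `c` gets an ordinal size
`σ c = succ (∑ i, σ (c ++ [i]))`, the infinite ordinal sum being the supremum of its partial
sums. The position of a node `x` is `σ x` plus, for every prefix `p ++ [k]` of `x`, the sizes
`σ (p ++ [i])` of its left siblings `i < k`; in effect it is the order type of `x` together
with its Kleene–Brouwer predecessors. Going down to a proper extension, or jumping to the left
of a branching point, strictly lowers the position, so `KBLt` pulls back `<` on ordinals.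
-/

namespace KleeneBrouwer

variable {T : Set (List ℕ)}
  (hwf : WellFounded
    (fun a b : T => (b : List ℕ) <+: (a : List ℕ) ∧ (b : List ℕ) ≠ (a : List ℕ)))

open Classical in
noncomputable def subtreeSize (x : List ℕ) : Ordinal.{0} :=
  if hx : x ∈ T then
    hwf.fix (C := fun _ => Ordinal.{0})
      (fun y rec => Order.succ (⨆ n : ℕ, ((List.range n).map fun i =>
        if h : (y : List ℕ) ++ [i] ∈ T then rec ⟨_, h⟩ ⟨⟨[i], rfl⟩, by simp⟩
        else 0).sum))
      ⟨x, hx⟩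
  else 0

noncomputable def leftSiblingsSize (c : List ℕ) (k : ℕ) : Ordinal.{0} :=
  ((List.range k).map fun i => subtreeSize hwf (c ++ [i])).sum

lemma subtreeSize_eq {x : List ℕ} (hx : x ∈ T) :
    subtreeSize hwf x = Order.succ (⨆ n : ℕ, leftSiblingsSize hwf x n) := by
  rw [subtreeSize, dif_pos hx, WellFounded.fix_eq]
  refine congrArg Order.succ (iSup_congr fun n => ?_)
  refine congrArg List.sum (List.map_congr_left fun i _ => ?_)
  by_cases h : x ++ [i] ∈ T <;> simp [subtreeSize, h]

lemma subtreeSize_pos {x : List ℕ} (hx : x ∈ T) : 0 < subtreeSize hwf x := by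
  rw [subtreeSize_eq hwf hx]
  exact Order.bot_lt_succ _

lemma leftSiblingsSize_lt_subtreeSize {c : List ℕ} (hc : c ∈ T) (n : ℕ) :
    leftSiblingsSize hwf c n < subtreeSize hwf c := by
  rw [subtreeSize_eq hwf hc, Order.lt_succ_iff]
  exact le_ciSup Ordinal.bddAbove_of_small n

lemma leftSiblingsSize_succ (c : List ℕ) (k : ℕ) :
    leftSiblingsSize hwf c (k + 1) = leftSiblingsSize hwf c k + subtreeSize hwf (c ++ [k]) := by
  simp [leftSiblingsSize, List.range_succ]

lemma leftSiblingsSize_mono (c : List ℕ) : Monotone (leftSiblingsSize hwf c) :=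
  monotone_nat_of_le_succ fun k => by rw [leftSiblingsSize_succ]; exact le_self_add

/-- The sum of the sizes of the left siblings met when descending from `c` along `r`. -/
noncomputable def pathOffset : List ℕ → List ℕ → Ordinal.{0}
  | _, [] => 0
  | c, k :: r => leftSiblingsSize hwf c k + pathOffset (c ++ [k]) r

lemma pathOffset_append (c u v : List ℕ) :
    pathOffset hwf c (u ++ v) = pathOffset hwf c u + pathOffset hwf (c ++ u) v := by
  induction u generalizing c with
  | nil => simp [pathOffset]
  | cons k r ih => simp [pathOffset, ih, add_assoc]

lemma pathOffset_cons_add_subtreeSize {c r : List ℕ} {k : ℕ} :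
    pathOffset hwf c (k :: r) + subtreeSize hwf (c ++ k :: r) =
      leftSiblingsSize hwf c k +
        (pathOffset hwf (c ++ [k]) r + subtreeSize hwf (c ++ [k] ++ r)) := by
  simp [pathOffset, add_assoc]

variable {hwf}

lemma pathOffset_add_subtreeSize_le (hclosed : PrefixClosed T) {c r : List ℕ}
    (hmem : c ++ r ∈ T) :
    pathOffset hwf c r + subtreeSize hwf (c ++ r) ≤ subtreeSize hwf c := by
  induction r generalizing c with
  | nil => simp [pathOffset]
  | cons k r ih =>
    have hck : c ++ [k] ++ r ∈ T := by simpa using hmem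
    calc pathOffset hwf c (k :: r) + subtreeSize hwf (c ++ k :: r)
        ≤ leftSiblingsSize hwf c k + subtreeSize hwf (c ++ [k]) := by
          rw [pathOffset_cons_add_subtreeSize]; exact add_le_add_right (ih hck) _
      _ = leftSiblingsSize hwf c (k + 1) := (leftSiblingsSize_succ hwf c k).symm
      _ ≤ subtreeSize hwf c :=
          (leftSiblingsSize_lt_subtreeSize hwf (hclosed _ hmem c (List.prefix_append _ _)) _).le

lemma pathOffset_cons_add_subtreeSize_le (hclosed : PrefixClosed T) {c r : List ℕ} {k : ℕ}
    (hmem : c ++ k :: r ∈ T) :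
    pathOffset hwf c (k :: r) + subtreeSize hwf (c ++ k :: r) ≤
      leftSiblingsSize hwf c (k + 1) := by
  rw [pathOffset_cons_add_subtreeSize, leftSiblingsSize_succ]
  exact add_le_add_right (pathOffset_add_subtreeSize_le hclosed (by simpa using hmem)) _

variable (hwf) in
noncomputable def position (x : List ℕ) : Ordinal.{0} :=
  pathOffset hwf [] x + subtreeSize hwf x

lemma position_append_cons (x r : List ℕ) (k : ℕ) :
    position hwf (x ++ k :: r) =
      pathOffset hwf [] x + (pathOffset hwf x (k :: r) + subtreeSize hwf (x ++ k :: r)) := by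
  rw [position, pathOffset_append, List.nil_append, add_assoc]

lemma position_append_lt (hclosed : PrefixClosed T) {x r : List ℕ} (hx : x ∈ T)
    (hr : r ≠ []) (hmem : x ++ r ∈ T) : position hwf (x ++ r) < position hwf x := by
  obtain ⟨k, r, rfl⟩ := List.exists_cons_of_ne_nil hr
  rw [position_append_cons, position]
  refine add_lt_add_right ?_ _
  exact (pathOffset_cons_add_subtreeSize_le hclosed hmem).trans_lt
    (leftSiblingsSize_lt_subtreeSize hwf hx _)

lemma position_lt_of_branch (hclosed : PrefixClosed T) {l ra rb : List ℕ} {m n : ℕ}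
    (hmn : m < n) (ha : l ++ m :: ra ∈ T) (hb : l ++ n :: rb ∈ T) :
    position hwf (l ++ m :: ra) < position hwf (l ++ n :: rb) := by
  rw [position_append_cons, position_append_cons]
  refine add_lt_add_right ?_ _
  calc pathOffset hwf l (m :: ra) + subtreeSize hwf (l ++ m :: ra)
      ≤ leftSiblingsSize hwf l n := (pathOffset_cons_add_subtreeSize_le hclosed ha).trans
        (leftSiblingsSize_mono hwf l hmn)
    _ < leftSiblingsSize hwf l n +
          (pathOffset hwf (l ++ [n]) rb + subtreeSize hwf (l ++ [n] ++ rb)) :=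
        lt_add_of_pos_right _ ((subtreeSize_pos hwf (by simpa using hb)).trans_le le_add_self)
    _ = pathOffset hwf l (n :: rb) + subtreeSize hwf (l ++ n :: rb) :=
        (pathOffset_cons_add_subtreeSize hwf).symm

lemma position_lt_of_kbLt (hclosed : PrefixClosed T) {a b : List ℕ} (ha : a ∈ T)
    (hb : b ∈ T) (hab : KBLt a b) : position hwf a < position hwf b := by
  rcases hab with ⟨⟨r, rfl⟩, hne⟩ | ⟨l, m, n, hmn, ⟨ra, rfl⟩, ⟨rb, rfl⟩⟩
  · exact position_append_lt hclosed hb (by rintro rfl; simp at hne) ha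
  · simpa using position_lt_of_branch hclosed hmn (by simpa using ha) (by simpa using hb)

end KleeneBrouwer

open KleeneBrouwer in
theorem kb_wellFounded_on_wellFounded_tree (T : Set (List ℕ))
    (hclosed : PrefixClosed T)
    (hwf : WellFounded (fun a b : T => (b : List ℕ) <+: (a : List ℕ) ∧ (b : List ℕ) ≠ (a : List ℕ))) :
    WellFounded (fun a b : T => KBLt (a : List ℕ) (b : List ℕ)) :=
  Subrelation.wf (fun {a b} => position_lt_of_kbLt hclosed a.2 b.2)
    (InvImage.wf (fun x : T => position hwf x) Ordinal.lt_wf)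
end

section
/- Let T ⊆ List ℕ be a nonempty prefix-closed well-founded tree, and let α be the depth of T, i.e., the ordinal rank of the root [] with respect to the proper-extension relation on T. Then the order type of the Kleene–Brouwer ordering on T is at most ω^α + 1. -/
theorem Ordinal.type_le_of_forall_lt {α : Type*} {r : α → α → Prop} [IsWellOrder α r]
    {o : Ordinal} (f : α → Ordinal) (hlt : ∀ a, f a < o) (hf : ∀ a b, r a b → f a < f b) :
    Ordinal.type r ≤ o := by
  let g : r ↪r ((· < ·) : o.ToType → o.ToType → Prop) :=
    RelEmbedding.ofMonotone (fun a ↦ Ordinal.ToType.mk ⟨f a, hlt a⟩) fun a b h ↦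
      Ordinal.ToType.mk.lt_iff_lt.2 (hf a b h)
  simpa only [Ordinal.type_toType] using g.ordinal_type_le

namespace KleeneBrouwer

open Ordinal

variable (T : Set (List ℕ)) (r : List ℕ → Ordinal)

def RankDecreasing : Prop :=
  ∀ l m, l ++ [m] ∈ T → r (l ++ [m]) < r l

open Classical in
noncomputable def childWeight (l : List ℕ) (m : ℕ) : Ordinal :=
  if l ++ [m] ∈ T then ω ^ r (l ++ [m]) + 1 else 0

noncomputable def siblingOffset (l : List ℕ) : ℕ → Ordinal
  | 0 => 0
  | n + 1 => siblingOffset l n + childWeight T r l n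

/-- `code l s` is the position of the node `l ++ s` within the subtree rooted at `l`. -/
noncomputable def code : List ℕ → List ℕ → Ordinal
  | l, [] => ω ^ r l
  | l, n :: s => siblingOffset T r l n + code (l ++ [n]) s

variable {T r}

theorem childWeight_lt (hr : RankDecreasing T r) (l : List ℕ) (m : ℕ) :
    childWeight T r l m < ω ^ r l := by
  unfold childWeight
  split_ifs with h
  · have hpos : 0 < r l := zero_le.trans_lt (hr l m h)
    exact isPrincipal_add_omega0_opow _ ((opow_lt_opow_iff_right one_lt_omega0).2 (hr l m h))
      (by simpa using (opow_lt_opow_iff_right one_lt_omega0).2 hpos)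
  · exact opow_pos _ omega0_pos

theorem siblingOffset_lt (hr : RankDecreasing T r) (l : List ℕ) (n : ℕ) :
    siblingOffset T r l n < ω ^ r l := by
  induction n with
  | zero => exact opow_pos _ omega0_pos
  | succ n ih => exact isPrincipal_add_omega0_opow _ ih (childWeight_lt hr l n)

theorem siblingOffset_mono (l : List ℕ) : Monotone (siblingOffset T r l) :=
  monotone_nat_of_le_succ fun _ ↦ le_self_add

theorem add_lt_siblingOffset_succ {l : List ℕ} {n : ℕ} (h : l ++ [n] ∈ T) {x : Ordinal}
    (hx : x ≤ ω ^ r (l ++ [n])) : siblingOffset T r l n + x < siblingOffset T r l (n + 1) := by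
  rw [siblingOffset, childWeight, if_pos h]
  exact add_lt_add_right (Order.lt_add_one_iff.2 hx) _

theorem code_pos (l s : List ℕ) : 0 < code T r l s := by
  induction s generalizing l with
  | nil => exact opow_pos _ omega0_pos
  | cons n s ih => exact (ih _).trans_le le_add_self

theorem code_le (hT : PrefixClosed T) (hr : RankDecreasing T r) {l s : List ℕ}
    (h : l ++ s ∈ T) : code T r l s ≤ ω ^ r l := by
  induction s generalizing l with
  | nil => exact le_rfl
  | cons n s ih =>
    rw [← List.singleton_append, ← List.append_assoc] at h
    have hn : l ++ [n] ∈ T := hT _ h _ (List.prefix_append _ _)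
    exact ((add_lt_siblingOffset_succ hn (ih h)).trans (siblingOffset_lt hr l _)).le

theorem code_cons_lt_siblingOffset_succ (hT : PrefixClosed T) (hr : RankDecreasing T r)
    {l s : List ℕ} {n : ℕ} (h : l ++ n :: s ∈ T) :
    code T r l (n :: s) < siblingOffset T r l (n + 1) := by
  rw [← List.singleton_append, ← List.append_assoc] at h
  exact add_lt_siblingOffset_succ (hT _ h _ (List.prefix_append _ _)) (code_le hT hr h)

theorem code_append_lt_code (hT : PrefixClosed T) (hr : RankDecreasing T r) {l s : List ℕ}
    (t : List ℕ) (hs : s ≠ []) (h : l ++ (t ++ s) ∈ T) :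
    code T r l (t ++ s) < code T r l t := by
  induction t generalizing l with
  | nil =>
    obtain ⟨n, s, rfl⟩ := List.exists_cons_of_ne_nil hs
    exact (code_cons_lt_siblingOffset_succ hT hr h).trans (siblingOffset_lt hr l _)
  | cons n t ih =>
    exact add_lt_add_right (ih (l := l ++ _) (by simpa using h)) _

theorem code_lt_code_of_lt (hT : PrefixClosed T) (hr : RankDecreasing T r) {m n : ℕ} (hmn : m < n)
    {l s t : List ℕ} (p : List ℕ) (h : l ++ (p ++ m :: s) ∈ T) :
    code T r l (p ++ m :: s) < code T r l (p ++ n :: t) := by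
  induction p generalizing l with
  | nil =>
    calc code T r l (m :: s)
        < siblingOffset T r l (m + 1) := code_cons_lt_siblingOffset_succ hT hr h
      _ ≤ siblingOffset T r l n := siblingOffset_mono l hmn
      _ < code T r l (n :: t) := lt_add_of_pos_right _ (code_pos _ _)
  | cons a p ih =>
    exact add_lt_add_right (ih (l := l ++ _) (by simpa using h)) _

theorem code_lt_code_of_kbLt (hT : PrefixClosed T) (hr : RankDecreasing T r) {x y : List ℕ}
    (hx : x ∈ T) (hxy : KBLt x y) : code T r [] x < code T r [] y := by
  rcases hxy with ⟨⟨s, rfl⟩, hne⟩ | ⟨p, m, n, hmn, ⟨s, rfl⟩, ⟨t, rfl⟩⟩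
  · exact code_append_lt_code hT hr y (by rintro rfl; simp at hne) hx
  · simpa using code_lt_code_of_lt hT hr hmn p (l := []) (s := s) (t := t) (by simpa using hx)

theorem type_kbLt_le_omega0_opow (hT : PrefixClosed T) (hr : RankDecreasing T r)
    [IsWellOrder T (fun a b : T => KBLt (a : List ℕ) (b : List ℕ))] :
    Ordinal.type (fun a b : T => KBLt (a : List ℕ) (b : List ℕ)) ≤ ω ^ r [] + 1 :=
  type_le_of_forall_lt (fun x ↦ code T r [] x)
    (fun x ↦ Order.lt_add_one_iff.2 (code_le hT hr (by simp)))
    (fun x y h ↦ code_lt_code_of_kbLt hT hr x.2 h)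

end KleeneBrouwer

theorem kb_type_le_omega_pow_depth (T : Set (List ℕ))
    (hclosed : PrefixClosed T) (hroot : ([] : List ℕ) ∈ T)
    (hwf : WellFounded (fun a b : T => (b : List ℕ) <+: (a : List ℕ) ∧ (b : List ℕ) ≠ (a : List ℕ)))
    (hwo : IsWellOrder T (fun a b : T => KBLt (a : List ℕ) (b : List ℕ))) :
    @Ordinal.type T (fun a b : T => KBLt (a : List ℕ) (b : List ℕ)) hwo ≤
      Ordinal.omega0 ^ (hwf.apply (⟨[], hroot⟩ : T)).rank + 1 := by
  classical
  let depth (l : List ℕ) : Ordinal := if h : l ∈ T then (hwf.apply ⟨l, h⟩).rank else 0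
  have hdepth : KleeneBrouwer.RankDecreasing T depth := by
    intro l m h
    have hl : l ∈ T := hclosed _ h _ (List.prefix_append _ _)
    simp only [depth, dif_pos h, dif_pos hl]
    exact (hwf.apply _).rank_lt_of_rel ⟨List.prefix_append _ _, by simp⟩
  simpa [depth, dif_pos hroot] using KleeneBrouwer.type_kbLt_le_omega0_opow hclosed hdepth
end

section
/- Let T and T₂ be prefix-closed subsets of List ℕ, with T₂ a well-founded tree, and suppose kb : T → T₂ is a function such that whenever a, b ∈ T and a is a proper prefix of b, then kb(b) <KB kb(a) in the Kleene–Brouwer ordering on T₂. Then the proper-extension relation on T is well-founded, and the ordinal rank of every node of T (in particular the depth of T) is at most the order type of the Kleene–Brouwer ordering on T₂. -/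
universe u

theorem Acc.rank_le_rank_of_relHom {α β : Type u} {r : α → α → Prop}
    {s : β → β → Prop} (f : r →r s) {a : α} (ha : Acc r a) (hfa : Acc s (f a)) :
    ha.rank ≤ hfa.rank := by
  induction ha with
  | intro a ha ih =>
    rw [Acc.rank_eq]
    refine Ordinal.iSup_le fun ⟨b, hba⟩ => Order.succ_le_of_lt ?_
    calc (ha b hba).rank ≤ (hfa.inv (f.map_rel hba)).rank := ih b hba _
      _ < hfa.rank := hfa.rank_lt_of_rel (f.map_rel hba)

theorem WellFounded.rank_lt_type_of_relHom {α β : Type u} {r : α → α → Prop}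
    {s : β → β → Prop} [IsWellOrder β s] (f : r →r s) (hwf : WellFounded r) (a : α) :
    (hwf.apply a).rank < Ordinal.type s :=
  calc (hwf.apply a).rank ≤ IsWellFounded.rank s (f a) := Acc.rank_le_rank_of_relHom f _ _
    _ = Ordinal.typein s (f a) := by rw [IsWellFounded.rank_eq_typein]
    _ < Ordinal.type s := Ordinal.typein_lt_type s _

theorem rank_le_kb_type_of_kb_labeling_general (T T₂ : Set (List ℕ))
    (hwo₂ : IsWellOrder T₂ (fun a b : T₂ => KBLt (a : List ℕ) (b : List ℕ)))
    (kb : T → T₂)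
    (hkb : ∀ a b : T, (a : List ℕ) <+: (b : List ℕ) → (a : List ℕ) ≠ (b : List ℕ) →
      KBLt (kb b : List ℕ) (kb a : List ℕ)) :
    ∃ hwf : WellFounded
        (fun a b : T => (b : List ℕ) <+: (a : List ℕ) ∧ (b : List ℕ) ≠ (a : List ℕ)),
      ∀ a : T, (hwf.apply a).rank ≤
        @Ordinal.type T₂ (fun a b : T₂ => KBLt (a : List ℕ) (b : List ℕ)) hwo₂ := by
  let f : (fun a b : T => (b : List ℕ) <+: (a : List ℕ) ∧ (b : List ℕ) ≠ (a : List ℕ)) →r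
      (fun a b : T₂ => KBLt (a : List ℕ) (b : List ℕ)) :=
    ⟨kb, fun h => hkb _ _ h.1 h.2⟩
  have hwf := RelHomClass.wellFounded f hwo₂.wf
  exact ⟨hwf, fun a => (hwf.rank_lt_type_of_relHom f a).le⟩

theorem rank_le_kb_type_of_kb_labeling (T T₂ : Set (List ℕ))
    (hT : PrefixClosed T) (hT₂ : PrefixClosed T₂)
    (hwf₂ : WellFounded
      (fun a b : T₂ => (b : List ℕ) <+: (a : List ℕ) ∧ (b : List ℕ) ≠ (a : List ℕ)))
    (hwo₂ : IsWellOrder T₂ (fun a b : T₂ => KBLt (a : List ℕ) (b : List ℕ)))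
    (kb : T → T₂)
    (hkb : ∀ a b : T, (a : List ℕ) <+: (b : List ℕ) → (a : List ℕ) ≠ (b : List ℕ) →
      KBLt (kb b : List ℕ) (kb a : List ℕ)) :
    ∃ hwf : WellFounded
        (fun a b : T => (b : List ℕ) <+: (a : List ℕ) ∧ (b : List ℕ) ≠ (a : List ℕ)),
      ∀ a : T, (hwf.apply a).rank ≤
        @Ordinal.type T₂ (fun a b : T₂ => KBLt (a : List ℕ) (b : List ℕ)) hwo₂ :=
  rank_le_kb_type_of_kb_labeling_general T T₂ hwo₂ kb hkb
end

section
/- Transfinite induction along the Kleene–Brouwer ordering: let T₂ ⊆ List ℕ be a prefix-closed well-founded tree and X : List ℕ → Prop a predicate that is progressive with respect to the Kleene–Brouwer ordering on T₂, i.e., for all a ∈ T₂, if X(b) holds for all b ∈ T₂ with b <KB a, then X(a). Then X(a) holds for every a ∈ T₂. -/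
/-!
Call `b` *left of* `s` when `b` and `s` first differ at a position where `b` is smaller; this is
the second clause of `b <KB s`. By well-founded induction on the tree (from the leaves towards
the root) we show: if `X` holds on everything in `T` left of `s`, then `X` holds on the whole
subtree below `s`. The subtree below `s` is `s` together with the subtrees below the children
`s ++ [n]`, and what lies left of `s ++ [n]` is what lies left of `s` together with the subtrees
below `s ++ [m]` for `m < n`; so an inner induction on `n` handles the children, and then
everything KB-below `s` is covered and progressiveness gives `X s`. At the root `[]` nothing
lies to the left.
-/

theorem List.IsPrefix.eq_or_exists_append_singleton_prefix {α : Type*} {s a : List α}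
    (h : s <+: a) : s = a ∨ ∃ n, s ++ [n] <+: a := by
  obtain ⟨_ | ⟨n, t⟩, rfl⟩ := h
  · exact Or.inl (List.append_nil s).symm
  · exact Or.inr ⟨n, t, by simp⟩

namespace KBLt

def LeftOf (b s : List ℕ) : Prop :=
  ∃ (l : List ℕ) (m n : ℕ), m < n ∧ (l ++ [m]) <+: b ∧ (l ++ [n]) <+: s

theorem not_leftOf_nil (b : List ℕ) : ¬ LeftOf b [] := by
  rintro ⟨l, m, n, -, -, h⟩
  simpa using h.length_le

theorem leftOf_append_singleton {b s : List ℕ} {n : ℕ} (h : LeftOf b (s ++ [n])) :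
    LeftOf b s ∨ ∃ m < n, s ++ [m] <+: b := by
  obtain ⟨l, m', n', hmn, hb, hs⟩ := h
  have hlen : l.length ≤ s.length := by simpa using hs.length_le
  rcases hlen.lt_or_eq with hlt | heq
  · exact Or.inl ⟨l, m', n', hmn, hb,
      List.prefix_of_prefix_length_le hs (s.prefix_append [n]) (by simpa using hlt)⟩
  · obtain ⟨rfl, rfl⟩ : l = s ∧ n' = n := by simpa using hs.eq_of_length (by simp [heq])
    exact Or.inr ⟨m', hmn, hb⟩

theorem leftOf_or_exists_append_singleton_prefix {b s : List ℕ} (h : KBLt b s) :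
    LeftOf b s ∨ ∃ n, s ++ [n] <+: b := by
  rcases h with ⟨hpre, hne⟩ | h
  · exact Or.inr (hpre.eq_or_exists_append_singleton_prefix.resolve_left hne)
  · exact Or.inl h

theorem forall_prefix_of_forall_leftOf {T : Set (List ℕ)} (hT : PrefixClosed T)
    (hwf : WellFounded fun a b : T => (b : List ℕ) <+: a ∧ (b : List ℕ) ≠ a)
    {X : List ℕ → Prop} (hprog : ∀ a ∈ T, (∀ b ∈ T, KBLt b a → X b) → X a)
    (s : T) (hleft : ∀ b ∈ T, LeftOf b s → X b) :
    ∀ a ∈ T, (s : List ℕ) <+: a → X a := by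
  induction s using hwf.induction with
  | _ s ih =>
    have hchild : ∀ n, ∀ a ∈ T, (s : List ℕ) ++ [n] <+: a → X a := by
      intro n
      induction n using Nat.strong_induction_on with
      | _ n ihn =>
        intro a ha hsa
        have hchild_mem : (s : List ℕ) ++ [n] ∈ T := hT a ha _ hsa
        refine ih ⟨_, hchild_mem⟩ ⟨s.1.prefix_append [n], by simp⟩
          (fun b hb hbs => ?_) a ha hsa
        rcases leftOf_append_singleton hbs with hbs | ⟨m, hmn, hsb⟩
        · exact hleft b hb hbs
        · exact ihn m hmn b hb hsb
    intro a ha hsa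
    rcases hsa.eq_or_exists_append_singleton_prefix with rfl | ⟨n, hsa⟩
    · refine hprog _ ha fun b hb hbs => ?_
      rcases leftOf_or_exists_append_singleton_prefix hbs with hbs | ⟨n, hsb⟩
      · exact hleft b hb hbs
      · exact hchild n b hb hsb
    · exact hchild n a ha hsa

end KBLt

theorem kb_transfinite_induction (T₂ : Set (List ℕ)) (hclosed : PrefixClosed T₂)
    (hwf : WellFounded
      (fun a b : T₂ => (b : List ℕ) <+: (a : List ℕ) ∧ (b : List ℕ) ≠ (a : List ℕ)))
    (X : List ℕ → Prop)
    (hprog : ∀ a ∈ T₂, (∀ b ∈ T₂, KBLt b a → X b) → X a) :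
    ∀ a ∈ T₂, X a := fun a ha =>
  KBLt.forall_prefix_of_forall_leftOf hclosed hwf hprog ⟨[], hclosed a ha [] a.nil_prefix⟩
    (fun b _ hb => (KBLt.not_leftOf_nil b hb).elim) a ha a.nil_prefix
end
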